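/- Let m = p_1^{k_1} p_2^{k_2} ⋯ p_h^{k_h} be the prime factorization of m ≥ 2 (distinct primes p_i, k_i ≥ 1), let T_f be a surjective linear cellular automaton on (ZMod m)^ℤ with local rule f(x_l,…,x_r) = Σ λ_i x_i (mod m), and for each i let T_{p_i^{k_i}} be the linear cellular automaton on (ZMod p_i^{k_i})^ℤ whose local rule is f reduced modulo p_i^{k_i}. Then T_f is strong mixing with respect to the uniform Bernoulli measure on (ZMod m)^ℤ if and only if for every 1 ≤ i ≤ h the automaton T_{p_i^{k_i}} is strong mixing with respect to the uniform Bernoulli measure on (ZMod p_i^{k_i})^ℤ. -/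

import Mathlib

open MeasureTheory Filter

/-- The linear cellular automaton on `(ZMod m)^ℤ` with local rule
`f(x_l, …, x_r) = Σ_{j=l}^{r} λ_j x_j (mod m)`. -/
noncomputable def cellAuto (m : ℕ) (l r : ℤ) (lam : ℤ → ZMod m) :
    (ℤ → ZMod m) → (ℤ → ZMod m) :=
  fun x i => ∑ j ∈ Finset.Icc l r, lam j * x (i + j)

/-- `μ` is the uniform Bernoulli measure on `(ZMod d)^ℤ`: the infinite product over `ℤ`
of the uniform probability measure on `ZMod d`, characterized by its values on cylinders. -/
def IsUniformBernoulli (d : ℕ) (μ : Measure (ℤ → ZMod d)) : Prop :=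
  IsProbabilityMeasure μ ∧
    ∀ (s : Finset ℤ) (a : ℤ → ZMod d),
      μ {x | ∀ i ∈ s, x i = a i} = ((d : ENNReal))⁻¹ ^ s.card

/-- `T` is strong mixing with respect to `μ`. -/
def StrongMixing {X : Type*} [MeasurableSpace X] (T : X → X) (μ : Measure X) : Prop :=
  ∀ A B : Set X, MeasurableSet A → MeasurableSet B →
    Tendsto (fun n : ℕ => μ (T^[n] ⁻¹' A ∩ B)) atTop (nhds (μ A * μ B))

/-!
Reducing every coordinate modulo the prime powers `p ^ k ∥ m` is, by the Chinese remainder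
theorem, a measurable isomorphism `(ℤ → ZMod m) ≃ Π p, (ℤ → ZMod (p ^ k))`. It conjugates `T_f`
to the product of the reduced automata, and it carries the uniform Bernoulli measure to the
product of the uniform Bernoulli measures, since both give a cylinder over `s` the mass
`(m⁻¹) ^ #s` and such a measure is unique. Strong mixing passes to factors, which gives `→`
through the coordinate projections, and to finite products, which gives `←`: on boxes
`μ (T^[n] ⁻¹' A ∩ B)` is a finite product of convergent factors, and a π-λ argument extends the
convergence to all measurable sets.
-/

open ProbabilityTheory
open scoped ENNReal Topology

section Mixing

variable {X : Type*} [MeasurableSpace X]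

lemma tendsto_measure_of_isPiSystem {ν : ℕ → Measure X} {ν' ρ : Measure X}
    [IsFiniteMeasure ρ] (hνρ : ∀ n, ν n ≤ ρ) {C : Set (Set X)}
    (hgen : ‹MeasurableSpace X› = MeasurableSpace.generateFrom C) (hC : IsPiSystem C)
    (huniv : Tendsto (fun n => ν n Set.univ) atTop (𝓝 (ν' Set.univ)))
    (hνC : ∀ s ∈ C, Tendsto (fun n => ν n s) atTop (𝓝 (ν' s)))
    {s : Set X} (hs : MeasurableSet s) : Tendsto (fun n => ν n s) atTop (𝓝 (ν' s)) := by
  have := fun n => isFiniteMeasure_of_le ρ (hνρ n)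
  have : IsFiniteMeasure ν' :=
    ⟨(le_of_tendsto' huniv fun n => hνρ n _).trans_lt (measure_lt_top ρ _)⟩
  induction s, hs using MeasurableSpace.induction_on_inter hgen hC with
  | empty => simp
  | basic s hs => exact hνC s hs
  | compl s hs ih =>
    simp only [measure_compl hs (measure_ne_top _ _)]
    exact ENNReal.Tendsto.sub huniv ih (Or.inl (measure_ne_top _ _))
  | iUnion f hdisj hf ih =>
    simp only [measure_iUnion hdisj hf, ← lintegral_count]
    refine tendsto_lintegral_of_dominated_convergence (fun k => ρ (f k))
      (fun _ => measurable_of_countable _) (fun n => .of_forall fun k => hνρ n (f k)) ?_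
      (.of_forall ih)
    rw [lintegral_count, ← measure_iUnion hdisj hf]
    exact measure_ne_top _ _

lemma StrongMixing.measurePreserving {T : X → X} {μ : Measure X} [IsProbabilityMeasure μ]
    (hT : Measurable T) (h : StrongMixing T μ) : MeasurePreserving T μ μ := by
  refine ⟨hT, Measure.ext fun A hA => ?_⟩
  have h1 := h (T ⁻¹' A) Set.univ (hT hA) .univ
  have h2 := (h A Set.univ hA .univ).comp (tendsto_add_atTop_nat 1)
  simp only [← Set.preimage_comp, ← Function.iterate_succ'] at h1
  simpa [Measure.map_apply hT hA] using tendsto_nhds_unique h1 h2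

lemma StrongMixing.of_isPiSystem {T : X → X} {μ : Measure X} [IsProbabilityMeasure μ]
    (hT : MeasurePreserving T μ μ) {C : Set (Set X)}
    (hgen : ‹MeasurableSpace X› = MeasurableSpace.generateFrom C) (hC : IsPiSystem C)
    (hmix : ∀ A ∈ C, ∀ B ∈ C,
      Tendsto (fun n => μ (T^[n] ⁻¹' A ∩ B)) atTop (𝓝 (μ A * μ B))) :
    StrongMixing T μ := by
  have hTn := fun n => hT.iterate n
  have hCmeas : ∀ s ∈ C, MeasurableSet s :=
    fun s hs => hgen ▸ MeasurableSpace.measurableSet_generateFrom hs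
  -- With the other set fixed, both `A ↦ μ (T^[n] ⁻¹' A ∩ B)` and `B ↦ μ (T^[n] ⁻¹' A ∩ B)`
  -- are measures bounded by `μ`, so convergence extends from `C` one variable at a time.
  have hmixC : ∀ B ∈ C, ∀ A, MeasurableSet A →
      Tendsto (fun n => μ (T^[n] ⁻¹' A ∩ B)) atTop (𝓝 (μ A * μ B)) := by
    intro B hB A hA
    have hν : ∀ n S, MeasurableSet S →
        (μ.restrict B).map T^[n] S = μ (T^[n] ⁻¹' S ∩ B) := fun n S hS => by
      rw [Measure.map_apply (hTn n).measurable hS, Measure.restrict_apply ((hTn n).measurable hS)]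
    have hle : ∀ n, (μ.restrict B).map T^[n] ≤ μ := fun n => calc
      _ ≤ μ.map T^[n] := Measure.map_mono Measure.restrict_le_self (hTn n).measurable
      _ = μ := (hTn n).map_eq
    simpa [hν _ _ hA, mul_comm] using tendsto_measure_of_isPiSystem hle hgen hC (ν' := μ B • μ)
      (by simp [hν _ _ .univ])
      (fun A' hA' => by simpa [hν _ _ (hCmeas A' hA'), mul_comm] using hmix A' hA' B hB) hA
  intro A B hA hB
  have hν : ∀ n S, μ.restrict (T^[n] ⁻¹' A) S = μ (T^[n] ⁻¹' A ∩ S) := fun n S => by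
    rw [Measure.restrict_apply' ((hTn n).measurable hA), Set.inter_comm]
  simpa [hν] using tendsto_measure_of_isPiSystem (ν := fun n => μ.restrict (T^[n] ⁻¹' A))
    (fun n => Measure.restrict_le_self) hgen hC (ν' := μ A • μ)
    (by simp [hν, (hTn _).measure_preimage hA.nullMeasurableSet])
    (fun B' hB' => by simpa [hν] using hmixC B' hB' A hA) hB

lemma StrongMixing.map_of_semiconj {Y : Type*} [MeasurableSpace Y] {T : X → X} {S : Y → Y}
    {φ : X → Y} {μ : Measure X} (hφ : Measurable φ) (hS : Measurable S)
    (hφTS : Function.Semiconj φ T S) (h : StrongMixing T μ) : StrongMixing S (μ.map φ) := by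
  intro A B hA hB
  have hpre : ∀ n, φ ⁻¹' (S^[n] ⁻¹' A ∩ B) = T^[n] ⁻¹' (φ ⁻¹' A) ∩ φ ⁻¹' B := fun n => by
    rw [Set.preimage_inter, ← Set.preimage_comp, ← Set.preimage_comp,
      (hφTS.iterate_right n).comp_eq]
  simp only [Measure.map_apply hφ (((hS.iterate _) hA).inter hB), hpre,
    Measure.map_apply hφ hA, Measure.map_apply hφ hB]
  exact h _ _ (hφ hA) (hφ hB)

end Mixing

lemma StrongMixing.pi {ι : Type*} [Fintype ι] {X : ι → Type*} [∀ i, MeasurableSpace (X i)]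
    {T : ∀ i, X i → X i} {μ : ∀ i, Measure (X i)} [∀ i, IsProbabilityMeasure (μ i)]
    (hT : ∀ i, Measurable (T i)) (h : ∀ i, StrongMixing (T i) (μ i)) :
    StrongMixing (Pi.map T) (Measure.pi μ) := by
  refine .of_isPiSystem (measurePreserving_pi μ μ fun i => (h i).measurePreserving (hT i))
    generateFrom_pi.symm isPiSystem_pi ?_
  rintro _ ⟨A, hA, rfl⟩ _ ⟨B, hB, rfl⟩
  have hbox : ∀ n, (Pi.map T)^[n] ⁻¹' Set.pi Set.univ A ∩ Set.pi Set.univ B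
      = Set.pi Set.univ fun i => (T i)^[n] ⁻¹' A i ∩ B i := fun n => by
    ext x; simp [Pi.map_iterate, forall_and]
  simp only [hbox, Measure.pi_pi, ← Finset.prod_mul_distrib]
  exact ENNReal.tendsto_finsetProd_of_ne_top _
    (fun i _ => h i _ _ (hA i trivial) (hB i trivial)) (fun i _ => by finiteness)

section Bernoulli

variable {d : ℕ}

lemma IsUniformBernoulli.neZero {μ : Measure (ℤ → ZMod d)} (h : IsUniformBernoulli d μ) :
    NeZero d := by
  refine ⟨fun hd => ?_⟩
  subst hd
  have := h.1
  simpa using (h.2 {0} 0).symm.trans_lt (measure_lt_top μ _)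

variable (d) [NeZero d]

noncomputable def uniformBernoulli : Measure (ℤ → ZMod d) :=
  Measure.infinitePi fun _ => uniformOn Set.univ

instance : IsProbabilityMeasure (uniformBernoulli d) := by
  unfold uniformBernoulli; infer_instance

variable {d}

lemma uniformOn_univ_singleton (a : ZMod d) : uniformOn Set.univ {a} = (d : ℝ≥0∞)⁻¹ := by
  simp [uniformOn_univ, ZMod.card]

lemma isUniformBernoulli_uniformBernoulli : IsUniformBernoulli d (uniformBernoulli d) := by
  refine ⟨inferInstance, fun s a => ?_⟩
  have : {x : ℤ → ZMod d | ∀ i ∈ s, x i = a i} = Set.pi s fun i => {a i} := by ext; simp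
  rw [this, uniformBernoulli, Measure.infinitePi_pi _ fun _ _ => measurableSet_singleton _]
  simp [uniformOn_univ_singleton]

lemma IsUniformBernoulli.map_restrict {μ : Measure (ℤ → ZMod d)} (h : IsUniformBernoulli d μ)
    (s : Finset ℤ) : μ.map s.restrict = Measure.pi fun _ : s => uniformOn Set.univ := by
  refine Measure.ext_of_singleton fun a => ?_
  obtain ⟨x, rfl⟩ : ∃ x : ℤ → ZMod d, s.restrict x = a :=
    ⟨fun i => if hi : i ∈ s then a ⟨i, hi⟩ else 0, by ext; simp⟩
  have : s.restrict ⁻¹' ({s.restrict x} : Set (s → ZMod d)) = {y | ∀ i ∈ s, y i = x i} := by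
    ext y; simp [funext_iff]
  rw [Measure.map_apply (Finset.measurable_restrict _) (measurableSet_singleton _), this, h.2,
    ← Set.univ_pi_singleton, Measure.pi_pi]
  simp [uniformOn_univ_singleton]

lemma IsUniformBernoulli.eq_uniformBernoulli {μ : Measure (ℤ → ZMod d)}
    (h : IsUniformBernoulli d μ) : μ = uniformBernoulli d :=
  have := h.1
  IsProjectiveLimit.unique
    (P := fun s : Finset ℤ => Measure.pi fun _ : s => uniformOn Set.univ) h.map_restrict
    (Measure.isProjectiveLimit_infinitePi _)

end Bernoulli

section CRT

instance Nat.primeFactors.neZero_pow_factorization {m : ℕ} (p : m.primeFactors) :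
    NeZero ((p : ℕ) ^ m.factorization p) :=
  ⟨pow_ne_zero _ (Nat.prime_of_mem_primeFactors p.2).ne_zero⟩

lemma ZMod.equivPi_apply {m : ℕ} (hm : m ≠ 0) (z : ZMod m) (p : m.primeFactors) :
    ZMod.equivPi m hm z p = ZMod.castHom (Nat.ordProj_dvd m p) _ z :=
  RingHom.congr_fun
    (Subsingleton.elim ((Pi.evalRingHom _ p).comp (ZMod.equivPi m hm).toRingHom) _) z

def MeasurableEquiv.piComm {α β : Type*} (X : β → Type*) [∀ b, MeasurableSpace (X b)] :
    (α → Π b, X b) ≃ᵐ Π b, α → X b where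
  toEquiv := Equiv.piComm fun _ => X
  measurable_toFun := measurable_pi_lambda _ fun b => measurable_pi_lambda _ fun a =>
    (measurable_pi_apply b).comp (measurable_pi_apply a)
  measurable_invFun := measurable_pi_lambda _ fun a => measurable_pi_lambda _ fun b =>
    (measurable_pi_apply a).comp (measurable_pi_apply b)

variable (m : ℕ) [NeZero m]

noncomputable def crtMeasurableEquiv :
    (ℤ → ZMod m) ≃ᵐ Π p : m.primeFactors, ℤ → ZMod (p ^ m.factorization p) :=
  (MeasurableEquiv.piCongrRight fun _ =>
    { toEquiv := (ZMod.equivPi m (NeZero.ne m)).toEquiv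
      measurable_toFun := measurable_of_countable _
      measurable_invFun := measurable_of_countable _ }).trans (MeasurableEquiv.piComm _)

variable {m}

lemma crtMeasurableEquiv_apply (x : ℤ → ZMod m) (p : m.primeFactors) (i : ℤ) :
    crtMeasurableEquiv m x p i = ZMod.castHom (Nat.ordProj_dvd m p) _ (x i) :=
  ZMod.equivPi_apply (NeZero.ne m) (x i) p

lemma crtMeasurableEquiv_symm_preimage_cylinder (s : Finset ℤ) (a : ℤ → ZMod m) :
    (crtMeasurableEquiv m).symm ⁻¹' {x | ∀ i ∈ s, x i = a i}
      = Set.pi Set.univ fun p => {y | ∀ i ∈ s, y i = crtMeasurableEquiv m a p i} := by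
  ext y
  obtain ⟨x, rfl⟩ := (crtMeasurableEquiv m).surjective y
  have key : ∀ i, x i = a i ↔ ∀ p, crtMeasurableEquiv m x p i = crtMeasurableEquiv m a p i :=
    fun i => (ZMod.equivPi m (NeZero.ne m)).injective.eq_iff.symm.trans funext_iff
  simp only [Set.mem_preimage, MeasurableEquiv.symm_apply_apply, Set.mem_ofPred_eq,
    Set.mem_univ_pi, key]
  exact ⟨fun h p i hi => h i hi p, fun h i hi p => h p i hi⟩

lemma isUniformBernoulli_map_crtMeasurableEquiv_symm :
    IsUniformBernoulli m ((Measure.pi fun p : m.primeFactors =>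
      uniformBernoulli (p ^ m.factorization p)).map (crtMeasurableEquiv m).symm) := by
  refine ⟨Measure.isProbabilityMeasure_map (MeasurableEquiv.measurable _).aemeasurable,
    fun s a => ?_⟩
  rw [MeasurableEquiv.map_apply, crtMeasurableEquiv_symm_preimage_cylinder, Measure.pi_pi]
  simp only [isUniformBernoulli_uniformBernoulli.2, Finset.prod_pow]
  rw [← ENNReal.prod_inv_distrib (fun _ _ _ _ _ => Or.inr (ENNReal.natCast_ne_top _)),
    ← Nat.cast_prod, ← Nat.prod_primeFactors_coe_pow_factorization (NeZero.ne m)]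

end CRT

lemma cellAuto_semiconj_ringHom {m n : ℕ} (φ : ZMod m →+* ZMod n) (l r : ℤ)
    (lam : ℤ → ZMod m) :
    Function.Semiconj (fun x i => φ (x i)) (cellAuto m l r lam)
      (cellAuto n l r fun j => φ (lam j)) := fun x => by
  ext i
  simp [cellAuto]

lemma crtMeasurableEquiv_semiconj {m : ℕ} [NeZero m] (l r : ℤ) (lam : ℤ → ZMod m) :
    Function.Semiconj (crtMeasurableEquiv m) (cellAuto m l r lam)
      (Pi.map fun p => cellAuto (p ^ m.factorization p) l r
        fun j => ZMod.castHom (Nat.ordProj_dvd m p) _ (lam j)) := fun x => by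
  ext p : 1
  rw [Pi.map_apply, funext (crtMeasurableEquiv_apply x p),
    funext (crtMeasurableEquiv_apply (cellAuto m l r lam x) p)]
  exact cellAuto_semiconj_ringHom _ l r lam x

lemma measurable_cellAuto (m : ℕ) [NeZero m] (l r : ℤ) (lam : ℤ → ZMod m) :
    Measurable (cellAuto m l r lam) :=
  have : MeasurableAdd₂ (ZMod m) := ⟨measurable_of_countable _⟩
  measurable_pi_lambda _ fun _ => Finset.measurable_sum _ fun j _ =>
    (measurable_of_countable (lam j * ·)).comp (measurable_pi_apply _)

theorem strongMixing_iff_forall_primePow_general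
    (m : ℕ) (l r : ℤ) (lam : ℤ → ZMod m)
    (μ : Measure (ℤ → ZMod m)) (hμ : IsUniformBernoulli m μ) :
    StrongMixing (cellAuto m l r lam) μ ↔
      ∀ p ∈ m.primeFactors,
        ∀ μp : Measure (ℤ → ZMod (p ^ m.factorization p)),
          IsUniformBernoulli (p ^ m.factorization p) μp →
          StrongMixing
            (cellAuto (p ^ m.factorization p) l r
              (fun i => ZMod.castHom (Nat.ordProj_dvd m p)
                (ZMod (p ^ m.factorization p)) (lam i)))
            μp := by
  have := hμ.neZero
  set Ψ := crtMeasurableEquiv m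
  set ν := fun p : m.primeFactors => uniformBernoulli (p ^ m.factorization p)
  have hΨ := crtMeasurableEquiv_semiconj l r lam
  have hT := fun p : m.primeFactors => measurable_cellAuto (p ^ m.factorization p) l r
    fun j => ZMod.castHom (Nat.ordProj_dvd m p) _ (lam j)
  have hμν : μ = (Measure.pi ν).map Ψ.symm := hμ.eq_uniformBernoulli.trans
    isUniformBernoulli_map_crtMeasurableEquiv_symm.eq_uniformBernoulli.symm
  constructor
  · intro hmix p hp μp hμp
    have := Nat.primeFactors.neZero_pow_factorization ⟨p, hp⟩
    have hpi := hmix.map_of_semiconj Ψ.measurable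
      (measurable_pi_lambda _ fun p => (hT p).comp (measurable_pi_apply p)) hΨ
    rw [hμν, Measure.map_map Ψ.measurable Ψ.symm.measurable, Ψ.self_comp_symm,
      Measure.map_id] at hpi
    rw [hμp.eq_uniformBernoulli]
    simpa only [(measurePreserving_eval ν ⟨p, hp⟩).map_eq] using
      hpi.map_of_semiconj (measurable_pi_apply _) (hT ⟨p, hp⟩) fun _ => rfl
  · intro h
    rw [hμν]
    have hpi := StrongMixing.pi hT fun p => h p p.2 _ isUniformBernoulli_uniformBernoulli
    exact hpi.map_of_semiconj Ψ.symm.measurable (measurable_cellAuto m l r lam)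
      (hΨ.inverse_left Ψ.left_inv Ψ.right_inv)

/-- Writing `m = p_1^{k_1} ⋯ p_h^{k_h}` for its prime factorization, a surjective linear
cellular automaton `T_f` over `ZMod m` is strong mixing for the uniform Bernoulli measure
iff, for every prime factor `p_i` of `m`, the cellular automaton over `ZMod p_i^{k_i}`
whose local rule is `f` reduced mod `p_i^{k_i}` is strong mixing for the uniform
Bernoulli measure on `(ZMod p_i^{k_i})^ℤ`. -/
theorem strongMixing_iff_forall_primePow
    (m : ℕ) (hm : 2 ≤ m) (l r : ℤ) (hlr : l ≤ r) (lam : ℤ → ZMod m)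
    (hsurj : Function.Surjective (cellAuto m l r lam))
    (μ : Measure (ℤ → ZMod m)) (hμ : IsUniformBernoulli m μ) :
    StrongMixing (cellAuto m l r lam) μ ↔
      ∀ p ∈ m.primeFactors,
        ∀ μp : Measure (ℤ → ZMod (p ^ m.factorization p)),
          IsUniformBernoulli (p ^ m.factorization p) μp →
          StrongMixing
            (cellAuto (p ^ m.factorization p) l r
              (fun i => ZMod.castHom (Nat.ordProj_dvd m p)
                (ZMod (p ^ m.factorization p)) (lam i)))
            μp :=
  strongMixing_iff_forall_primePow_general m l r lam μ hμ
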